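/- Let a and b be unit vectors in E and let R > 0. Then the Lebesgue volume of the set {x ∈ E : ‖x‖ < R and ⟨x, a⟩ · ⟨x, b⟩ < 0} equals (4/3) · arccos⟨a, b⟩ · R³. In particular this set occupies a fraction θ/π of the ball of radius R, where θ = arccos⟨a, b⟩. (This supports the generalization to viewpoints at finite distance — Theorem 2: when the viewpoint is chosen uniformly at random in a ball centered on the edge's supporting line, the probability that an edge with adjacent face normals a and b is on the transparent silhouette is θ_e/π = O(θ_e).) -/

import Mathlib

open MeasureTheory Real RealInnerProductSpace Set Module

/-!
With `θ = arccos ⟪a, b⟫`, the unit vectors `e₁ ∥ a + b` and `e₂ ∥ b - a` are orthogonal and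
`a = cos (θ/2) e₁ - sin (θ/2) e₂`, `b = cos (θ/2) e₁ + sin (θ/2) e₂`; when `b = ± a` one of them is
any unit vector orthogonal to `a`. In an orthonormal basis `(e₀, e₁, e₂)` the product
`⟪x, a⟫ * ⟪x, b⟫` becomes `(cos (θ/2) x₁)² - (sin (θ/2) x₂)²`, so it is negative exactly when
`(x₁, x₂)` lies within angle `θ/2` of the `e₂`-axis. The slice of the ball at height `x₀ = z`
is then two opposite sectors of opening `θ` in a disc of radius `√(R² - z²)`, of area
`θ (R² - z²)` by polar coordinates, and integrating over `z ∈ (-R, R)` gives `(4/3) θ R³`.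
-/

lemma cos_sq_lt_sin_sq_iff {β t : ℝ} (hβ₀ : 0 ≤ β) (hβ : β ≤ π / 2) (ht : t ∈ Icc 0 π) :
    cos t ^ 2 < sin β ^ 2 ↔ t ∈ Ioo (π / 2 - β) (π / 2 + β) := by
  have hsin : -sin β = cos (π / 2 + β) := by rw [add_comm, cos_add_pi_div_two]
  have hlo : π / 2 - β ∈ Icc 0 π := ⟨by linarith, by linarith [pi_pos]⟩
  have hhi : π / 2 + β ∈ Icc 0 π := ⟨by linarith [pi_pos], by linarith⟩
  rw [sq_lt_sq, abs_of_nonneg (sin_nonneg_of_nonneg_of_le_pi hβ₀ (by linarith)), abs_lt, hsin,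
    ← cos_pi_div_two_sub, strictAntiOn_cos.lt_iff_gt hhi ht,
    strictAntiOn_cos.lt_iff_gt ht hlo, and_comm]
  rfl

lemma Ioo_inter_setOf_cos_sq_lt_sin_sq {β : ℝ} (hβ₀ : 0 ≤ β) (hβ : β ≤ π / 2) :
    Ioo (-π) π ∩ {φ | cos φ ^ 2 < sin β ^ 2} = abs ⁻¹' Ioo (π / 2 - β) (π / 2 + β) := by
  ext φ
  simp only [mem_inter_iff, mem_ofPred_eq, mem_preimage, ← cos_abs φ]
  constructor
  · rintro ⟨hφ, h⟩
    exact (cos_sq_lt_sin_sq_iff hβ₀ hβ ⟨abs_nonneg φ, (abs_lt.2 hφ).le⟩).1 h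
  · intro h
    have hφ : |φ| < π := by linarith [h.2]
    exact ⟨abs_lt.1 hφ, (cos_sq_lt_sin_sq_iff hβ₀ hβ ⟨abs_nonneg φ, hφ.le⟩).2 h⟩

lemma volume_abs_preimage_Ioo {l u : ℝ} (hl : 0 ≤ l) (hlu : l ≤ u) :
    volume (abs ⁻¹' Ioo l u) = ENNReal.ofReal (2 * (u - l)) := by
  have hsplit : abs ⁻¹' Ioo l u = Ioo (-u) (-l) ∪ Ioo l u := by
    ext φ
    simp only [mem_preimage, mem_union, mem_Ioo, lt_abs, abs_lt]
    grind
  have hdisj : Disjoint (Ioo (-u) (-l)) (Ioo l u) :=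
    Ioo_disjoint_Ioo.2 (min_le_of_left_le (le_max_of_le_right (by linarith)))
  rw [hsplit, measure_union hdisj measurableSet_Ioo, volume_Ioo, volume_Ioo,
    ← ENNReal.ofReal_add (by linarith) (by linarith)]
  ring_nf

lemma setLIntegral_Ioo_ofReal_eq_intervalIntegral {f : ℝ → ℝ} {a b : ℝ} (hab : a ≤ b)
    (hf : Continuous f) (hf₀ : ∀ x ∈ Ioo a b, 0 ≤ f x) :
    ∫⁻ x in Ioo a b, ENNReal.ofReal (f x) = ENNReal.ofReal (∫ x in a..b, f x) := by
  rw [intervalIntegral.integral_of_le hab, integral_Ioc_eq_integral_Ioo,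
    ofReal_integral_eq_lintegral_ofReal (hf.integrableOn_Icc.mono_set Ioo_subset_Icc_self)
      ((ae_restrict_iff' measurableSet_Ioo).2 (ae_of_all _ hf₀))]

lemma volume_eq_setLIntegral_polarCoord {S : Set (ℝ × ℝ)} (hS : MeasurableSet S) :
    volume S = ∫⁻ p in polarCoord.symm ⁻¹' S ∩ polarCoord.target, ENNReal.ofReal p.1 := by
  rw [← Measure.restrict_restrict (hS.preimage continuous_polarCoord_symm.measurable),
    ← lintegral_indicator (hS.preimage continuous_polarCoord_symm.measurable),
    ← lintegral_indicator_one hS, ← lintegral_comp_polarCoord_symm]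
  congr 1 with p
  by_cases hp : polarCoord.symm p ∈ S
  · rw [smul_eq_mul, indicator_of_mem hp, indicator_of_mem (mem_preimage.2 hp), Pi.one_apply,
      mul_one]
  · rw [smul_eq_mul, indicator_of_notMem hp, indicator_of_notMem (mem_preimage.not.2 hp),
      mul_zero]

lemma setLIntegral_Ioo_prod_ofReal_fst {r : ℝ} (hr : 0 ≤ r) (A : Set ℝ) :
    ∫⁻ p in Ioo 0 r ×ˢ A, ENNReal.ofReal p.1 = ENNReal.ofReal (r ^ 2 / 2) * volume A := by
  rw [Measure.volume_eq_prod, ← Measure.prod_restrict,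
    lintegral_prod _ (by fun_prop : Measurable fun p : ℝ × ℝ ↦ ENNReal.ofReal p.1).aemeasurable]
  simp only [lintegral_const, Measure.restrict_apply_univ]
  rw [lintegral_mul_const _ (by fun_prop), setLIntegral_Ioo_ofReal_eq_intervalIntegral hr
    continuous_id' (fun x hx ↦ hx.1.le), integral_id]
  ring_nf

/-- The part of the disc `p.1 ^ 2 + p.2 ^ 2 < w` within angle `θ / 2` of the second axis: two
opposite sectors of opening `θ`. -/
def doubleSector (θ w : ℝ) : Set (ℝ × ℝ) :=
  {p | p.1 ^ 2 + p.2 ^ 2 < w ∧ (cos (θ / 2) * p.1) ^ 2 < (sin (θ / 2) * p.2) ^ 2}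

def doubleWedge (θ R : ℝ) : Set (ℝ × ℝ × ℝ) :=
  {q | q.2 ∈ doubleSector θ (R ^ 2 - q.1 ^ 2)}

lemma measurableSet_doubleWedge (θ R : ℝ) : MeasurableSet (doubleWedge θ R) := by
  unfold doubleWedge doubleSector
  measurability

lemma polarCoord_symm_preimage_doubleSector_inter_target (θ w : ℝ) :
    polarCoord.symm ⁻¹' doubleSector θ w ∩ polarCoord.target
      = Ioo 0 √w ×ˢ (Ioo (-π) π ∩ {φ | cos φ ^ 2 < sin (θ / 2) ^ 2}) := by
  ext ⟨ρ, φ⟩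
  have hnorm : (ρ * cos φ) ^ 2 + (ρ * sin φ) ^ 2 = ρ ^ 2 := by
    linear_combination ρ ^ 2 * sin_sq_add_cos_sq φ
  have hcone : (sin (θ / 2) * (ρ * sin φ)) ^ 2 - (cos (θ / 2) * (ρ * cos φ)) ^ 2
      = ρ ^ 2 * (sin (θ / 2) ^ 2 - cos φ ^ 2) := by
    linear_combination ρ ^ 2 * sin (θ / 2) ^ 2 * sin_sq_add_cos_sq φ
      - ρ ^ 2 * cos φ ^ 2 * sin_sq_add_cos_sq (θ / 2)
  simp only [doubleSector, mem_inter_iff, mem_preimage, polarCoord_symm_apply, mem_ofPred_eq,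
    polarCoord_target, mem_prod, mem_Ioi, mem_Ioo, hnorm,
    ← sub_pos (b := (cos (θ / 2) * _) ^ 2), hcone]
  by_cases hρ : 0 < ρ
  · simp only [hρ, lt_sqrt hρ.le, mul_pos_iff_of_pos_left (pow_pos hρ 2), sub_pos]
    tauto
  · simp [hρ]

lemma volume_doubleSector {θ : ℝ} (hθ₀ : 0 ≤ θ) (hθ : θ ≤ π) (w : ℝ) :
    volume (doubleSector θ w) = ENNReal.ofReal (θ * w) := by
  have hS : MeasurableSet (doubleSector θ w) := by
    unfold doubleSector
    measurability
  rw [volume_eq_setLIntegral_polarCoord hS, polarCoord_symm_preimage_doubleSector_inter_target,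
    setLIntegral_Ioo_prod_ofReal_fst (sqrt_nonneg w),
    Ioo_inter_setOf_cos_sq_lt_sin_sq (by linarith) (by linarith),
    volume_abs_preimage_Ioo (by linarith) (by linarith), ← ENNReal.ofReal_mul (by positivity)]
  rcases le_or_gt w 0 with hw | hw
  · rw [sqrt_eq_zero'.2 hw, ENNReal.ofReal_eq_zero.2 (mul_nonpos_of_nonneg_of_nonpos hθ₀ hw)]
    simp
  · rw [sq_sqrt hw.le]
    ring_nf

lemma volume_doubleWedge {θ R : ℝ} (hθ₀ : 0 ≤ θ) (hθ : θ ≤ π) (hR : 0 ≤ R) :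
    volume (doubleWedge θ R) = ENNReal.ofReal (4 / 3 * θ * R ^ 3) := by
  have hsupp : (fun z : ℝ ↦ ENNReal.ofReal (θ * (R ^ 2 - z ^ 2))).support ⊆ Ioo (-R) R := by
    intro z hz
    rw [Function.mem_support, ne_eq, ENNReal.ofReal_eq_zero, not_le] at hz
    exact abs_lt_of_sq_lt_sq' (sub_pos.1 (pos_of_mul_pos_right hz hθ₀)) hR
  have hslice (z : ℝ) : Prod.mk z ⁻¹' doubleWedge θ R = doubleSector θ (R ^ 2 - z ^ 2) := rfl
  rw [Measure.volume_eq_prod, Measure.prod_apply (measurableSet_doubleWedge θ R)]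
  simp_rw [hslice, volume_doubleSector hθ₀ hθ]
  rw [← setLIntegral_eq_of_support_subset hsupp, setLIntegral_Ioo_ofReal_eq_intervalIntegral
      (by linarith) (by fun_prop) (fun z hz ↦ mul_nonneg hθ₀ (by nlinarith [hz.1, hz.2])),
    intervalIntegral.integral_const_mul, intervalIntegral.integral_sub intervalIntegrable_const
      (intervalIntegral.intervalIntegrable_pow 2), intervalIntegral.integral_const, integral_pow,
    smul_eq_mul]
  ring_nf

section
variable {E : Type*} [NormedAddCommGroup E] [InnerProductSpace ℝ E] [FiniteDimensional ℝ E]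

lemma exists_norm_eq_one_inner_eq_zero_and_eq_norm_smul (hE : 2 ≤ finrank ℝ E) {u w : E}
    (huw : ⟪u, w⟫ = 0) : ∃ e : E, ‖e‖ = 1 ∧ ⟪u, e⟫ = 0 ∧ w = ‖w‖ • e := by
  by_cases hw : w = 0
  · have hK : (ℝ ∙ u)ᗮ ≠ ⊥ := by
      intro h
      have hsum := (ℝ ∙ u).finrank_add_finrank_orthogonal
      have hle : finrank ℝ (ℝ ∙ u) ≤ 1 := (finrank_span_le_card ({u} : Set E)).trans (by simp)
      rw [h, finrank_bot] at hsum
      omega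
    obtain ⟨x, hx, hx₀⟩ := Submodule.exists_mem_ne_zero_of_ne_bot hK
    refine ⟨‖x‖⁻¹ • x, norm_smul_inv_norm hx₀, ?_, by simp [hw]⟩
    rw [real_inner_smul_right, Submodule.mem_orthogonal_singleton_iff_inner_right.1 hx, mul_zero]
  · refine ⟨‖w‖⁻¹ • w, norm_smul_inv_norm hw, by rw [real_inner_smul_right, huw, mul_zero], ?_⟩
    rw [smul_inv_smul₀ (norm_ne_zero_iff.2 hw)]

lemma exists_orthonormal_half_angle_frame (hE : 2 ≤ finrank ℝ E) {a b : E} (ha : ‖a‖ = 1)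
    (hb : ‖b‖ = 1) :
    ∃ e₁ e₂ : E, ‖e₁‖ = 1 ∧ ‖e₂‖ = 1 ∧ ⟪e₁, e₂⟫ = 0 ∧
      a = cos (arccos ⟪a, b⟫ / 2) • e₁ - sin (arccos ⟪a, b⟫ / 2) • e₂ ∧
      b = cos (arccos ⟪a, b⟫ / 2) • e₁ + sin (arccos ⟪a, b⟫ / 2) • e₂ := by
  set β := arccos ⟪a, b⟫ / 2 with hβ
  have hab : |⟪a, b⟫| ≤ 1 := by simpa [ha, hb] using abs_real_inner_le_norm a b
  have hcos_sq : cos β ^ 2 = (1 + ⟪a, b⟫) / 2 := by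
    rw [cos_sq, hβ, mul_div_cancel₀ _ two_ne_zero, cos_arccos (abs_le.1 hab).1 (abs_le.1 hab).2]
    ring
  have hβ₀ : 0 ≤ β := div_nonneg (arccos_nonneg _) zero_le_two
  have hβ₁ : β ≤ π / 2 := by linarith [arccos_le_pi ⟪a, b⟫]
  have hplus : ‖a + b‖ = 2 * cos β := by
    rw [← sq_eq_sq₀ (norm_nonneg _) (mul_nonneg zero_le_two (cos_nonneg_of_mem_Icc
      ⟨by linarith [pi_pos], hβ₁⟩)), norm_add_sq_real, ha, hb, mul_pow, hcos_sq]
    ring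
  have hminus : ‖b - a‖ = 2 * sin β := by
    rw [← sq_eq_sq₀ (norm_nonneg _) (mul_nonneg zero_le_two (sin_nonneg_of_nonneg_of_le_pi hβ₀
      (by linarith [pi_pos]))), norm_sub_sq_real, ha, hb, mul_pow, sin_sq, hcos_sq,
      real_inner_comm]
    ring
  have horth : ⟪a + b, b - a⟫ = 0 := by
    rw [inner_add_left, inner_sub_right, inner_sub_right, real_inner_comm a b]
    simp [ha, hb]
  obtain ⟨e₂, he₂, hplus₂, hminus₂⟩ := exists_norm_eq_one_inner_eq_zero_and_eq_norm_smul hE horth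
  obtain ⟨e₁, he₁, he₂₁, hplus₁⟩ := exists_norm_eq_one_inner_eq_zero_and_eq_norm_smul hE
    (by rwa [real_inner_comm] : ⟪e₂, a + b⟫ = 0)
  rw [hplus] at hplus₁
  rw [hminus] at hminus₂
  refine ⟨e₁, e₂, he₁, he₂, by rwa [real_inner_comm], ?_, ?_⟩
  · calc a = (2 : ℝ)⁻¹ • ((a + b) - (b - a)) := by module
      _ = _ := by rw [hplus₁, hminus₂]; module
  · calc b = (2 : ℝ)⁻¹ • ((a + b) + (b - a)) := by module
      _ = _ := by rw [hplus₁, hminus₂]; module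

lemma exists_orthonormalBasis_fin_three (hE : finrank ℝ E = 3) {e₁ e₂ : E} (h₁ : ‖e₁‖ = 1)
    (h₂ : ‖e₂‖ = 1) (h₁₂ : ⟪e₁, e₂⟫ = 0) :
    ∃ B : OrthonormalBasis (Fin 3) ℝ E, B 1 = e₁ ∧ B 2 = e₂ := by
  have hv : Orthonormal ℝ (({1, 2} : Set (Fin 3)).domRestrict ![e₁, e₁, e₂]) := by
    rw [orthonormal_iff_ite]
    rintro ⟨i, hi⟩ ⟨j, hj⟩
    simp only [mem_insert_iff, mem_singleton_iff] at hi hj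
    rcases hi with rfl | rfl <;> rcases hj with rfl | rfl <;>
      simp [domRestrict_apply, h₁, h₂, h₁₂, real_inner_comm e₁ e₂]
  obtain ⟨B, hB⟩ := hv.exists_orthonormalBasis_extension_of_card_eq (by simpa using hE)
  exact ⟨B, hB 1 (by simp), hB 2 (by simp)⟩

variable [MeasurableSpace E] [BorelSpace E]

lemma OrthonormalBasis.measurePreserving_inner_fin_three (B : OrthonormalBasis (Fin 3) ℝ E) :
    MeasurePreserving (fun x ↦ (⟪B 0, x⟫, ⟪B 1, x⟫, ⟪B 2, x⟫)) volume volume := by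
  have := ((MeasurePreserving.id volume).prod (volume_preserving_finTwoArrow ℝ)).comp
    ((volume_preserving_piFinSuccAbove (fun _ : Fin 3 ↦ ℝ) 0).comp
      ((EuclideanSpace.volume_preserving_symm_measurableEquiv_toLp (Fin 3)).comp
        B.measurePreserving_repr))
  convert this using 1 <;> try rfl
  funext x
  simp [B.repr_apply_apply, Fin.tail]

end

/-- Viewpoints at finite distance (Theorem 2): the set of points of the ball of radius
`R` from which an edge with adjacent face normals `a` and `b` is on the transparent
silhouette has Lebesgue volume `(4/3)·arccos⟨a,b⟩·R³`, i.e. it occupies a fraction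
`θ_e/π` of the ball of volume `(4/3)·π·R³`. -/
theorem volume_silhouette_viewpoints_in_ball
    (a b : EuclideanSpace ℝ (Fin 3)) (ha : ‖a‖ = 1) (hb : ‖b‖ = 1)
    (R : ℝ) (hR : 0 < R) :
    volume {x : EuclideanSpace ℝ (Fin 3) | ‖x‖ < R ∧ ⟪x, a⟫ * ⟪x, b⟫ < 0}
      = ENNReal.ofReal ((4 / 3) * Real.arccos ⟪a, b⟫ * R ^ 3) := by
  obtain ⟨e₁, e₂, h₁, h₂, h₁₂, ha', hb'⟩ := exists_orthonormal_half_angle_frame (by simp) ha hb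
  obtain ⟨B, rfl, rfl⟩ := exists_orthonormalBasis_fin_three (by simp) h₁ h₂ h₁₂
  have hθ₀ := arccos_nonneg ⟪a, b⟫
  have hθ := arccos_le_pi ⟪a, b⟫
  generalize arccos ⟪a, b⟫ = θ at ha' hb' hθ₀ hθ ⊢
  have hcoords : {x | ‖x‖ < R ∧ ⟪x, a⟫ * ⟪x, b⟫ < 0}
      = (fun x ↦ (⟪B 0, x⟫, ⟪B 1, x⟫, ⟪B 2, x⟫)) ⁻¹' doubleWedge θ R := by
    ext x
    have hprod : ⟪x, a⟫ * ⟪x, b⟫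
        = (cos (θ / 2) * ⟪B 1, x⟫) ^ 2 - (sin (θ / 2) * ⟪B 2, x⟫) ^ 2 := by
      rw [ha', hb']
      simp only [inner_sub_right, inner_add_right, real_inner_smul_right,
        real_inner_comm (B 1) x, real_inner_comm (B 2) x]
      ring
    simp only [mem_preimage, doubleWedge, doubleSector, mem_ofPred_eq]
    rw [hprod, sub_neg, ← sq_lt_sq₀ (norm_nonneg x) hR.le, ← B.sum_sq_inner_right x,
      Fin.sum_univ_three, lt_sub_iff_add_lt', ← add_assoc]
  rw [hcoords, B.measurePreserving_inner_fin_three.measure_preimage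
      (measurableSet_doubleWedge θ R).nullMeasurableSet,
    volume_doubleWedge hθ₀ hθ hR.le]
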